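/- Let N be a closed normal subgroup of a locally compact Hausdorff topological group G. If WS(G) = AP(G), then WS(G/N) = AP(G/N). -/

import Mathlib

open BoundedContinuousFunction Topology Filter MeasureTheory

section DoubleOrbitDefs

variable {G : Type*} [Group G] [TopologicalSpace G] [IsTopologicalGroup G]

/-- The two-sided translate `ₓf_y : z ↦ f (x * z * y)` of a bounded continuous function. -/
noncomputable def biTranslate (x y : G) (f : G →ᵇ ℂ) : G →ᵇ ℂ :=
  f.compContinuous ⟨fun z => x * z * y, ((continuous_mul_left x).mul continuous_const)⟩

@[simp] theorem biTranslate_apply (x y : G) (f : G →ᵇ ℂ) (z : G) :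
    biTranslate x y f z = f (x * z * y) := rfl

/-- The double orbit `O(f) = {ₓf_y : x, y ∈ G}`. -/
def doubleOrbit (f : G →ᵇ ℂ) : Set (G →ᵇ ℂ) := {g | ∃ x y : G, g = biTranslate x y f}

/-- The left orbit `{ₓf : x ∈ G}`. -/
def leftOrbit (f : G →ᵇ ℂ) : Set (G →ᵇ ℂ) := {g | ∃ x : G, g = biTranslate x 1 f}

/-- A set of bounded continuous functions is relatively weakly compact if its closure in
the weak topology of `C_b(G)` is compact. -/
def RelWeaklyCompact (A : Set (G →ᵇ ℂ)) : Prop :=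
  IsCompact (closure (toWeakSpace ℂ (G →ᵇ ℂ) '' A))

/-- `f` is weakly almost periodic: the left orbit is relatively weakly compact. -/
def IsWAP (f : G →ᵇ ℂ) : Prop := RelWeaklyCompact (leftOrbit f)

/-- `f` is strictly weakly almost periodic: the double orbit is relatively weakly compact. -/
def IsWS (f : G →ᵇ ℂ) : Prop := RelWeaklyCompact (doubleOrbit f)

/-- `f` is almost periodic: the double orbit is relatively norm compact. -/
def IsAP (f : G →ᵇ ℂ) : Prop := IsCompact (closure (doubleOrbit f))

/-- `f` is strictly uniformly continuous: the double orbit is equicontinuous on `G`. -/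
def IsUCS (f : G →ᵇ ℂ) : Prop :=
  Equicontinuous (fun p : G × G => fun z : G => f (p.1 * z * p.2))

/-- `f` is left uniformly continuous. -/
def IsLUC (f : G →ᵇ ℂ) : Prop :=
  ∀ ε > (0 : ℝ), ∃ U ∈ 𝓝 (1 : G), ∀ s t : G, s * t⁻¹ ∈ U → dist (f s) (f t) < ε

/-- `f` is right uniformly continuous. -/
def IsRUC (f : G →ᵇ ℂ) : Prop :=
  ∀ ε > (0 : ℝ), ∃ U ∈ 𝓝 (1 : G), ∀ s t : G, t⁻¹ * s ∈ U → dist (f s) (f t) < ε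

/-- `f` is (two-sided) uniformly continuous. -/
def IsUC (f : G →ᵇ ℂ) : Prop := IsLUC f ∧ IsRUC f

/-- A subset of `G` is invariant if it is stable under all inner automorphisms. -/
def IsInvariantSet (V : Set G) : Prop := ∀ x : G, (fun g => x * g * x⁻¹) '' V = V

/-- A mean on `WAP(G)`: a positive linear functional with `m 1 = 1`, defined (at least)
on the weakly almost periodic functions. -/
def IsMeanOnWAP (m : (G →ᵇ ℂ) → ℂ) : Prop :=
  (∀ f g : G →ᵇ ℂ, IsWAP f → IsWAP g → m (f + g) = m f + m g) ∧
  (∀ (c : ℂ) (f : G →ᵇ ℂ), IsWAP f → m (c • f) = c * m f) ∧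
  m 1 = 1 ∧
  (∀ f : G →ᵇ ℂ, IsWAP f → (∀ z : G, 0 ≤ (f z).re ∧ (f z).im = 0) →
    0 ≤ (m f).re ∧ (m f).im = 0)

/-- A left-invariant mean on `WAP(G)`. -/
def IsLeftInvariantMeanOnWAP (m : (G →ᵇ ℂ) → ℂ) : Prop :=
  IsMeanOnWAP m ∧ ∀ (x : G) (f : G →ᵇ ℂ), IsWAP f → m (biTranslate x 1 f) = m f

end DoubleOrbitDefs

/-- `G` is an IN-group: it has a compact invariant neighborhood of the identity. -/
def IsINGroup (G : Type*) [Group G] [TopologicalSpace G] : Prop :=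
  ∃ V : Set G, IsCompact V ∧ V ∈ 𝓝 (1 : G) ∧ ∀ x : G, (fun g => x * g * x⁻¹) '' V = V

/-- `G` is a SIN-group: the invariant neighborhoods of the identity form a neighborhood
basis at the identity. -/
def IsSINGroup (G : Type*) [Group G] [TopologicalSpace G] : Prop :=
  ∀ U ∈ 𝓝 (1 : G), ∃ V ∈ 𝓝 (1 : G), V ⊆ U ∧ ∀ x : G, (fun g => x * g * x⁻¹) '' V = V

/-- The intersection of all closed invariant neighborhoods of the identity of `G`. -/
def invClosedNbhdCore (G : Type*) [Group G] [TopologicalSpace G] : Set G :=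
  ⋂₀ {V : Set G | IsClosed V ∧ V ∈ 𝓝 (1 : G) ∧ ∀ x : G, (fun g => x * g * x⁻¹) '' V = V}


section WeakAux

variable {E : Type*} [NormedAddCommGroup E] [NormedSpace ℂ E]
variable {F : Type*} [NormedAddCommGroup F] [NormedSpace ℂ F]

theorem weakSpace_t2 : T2Space (WeakSpace ℂ E) := by
  have hinj : Function.Injective ((topDualPairing ℂ E).flip) := by
    intro x y hxy
    rw [NormedSpace.eq_iff_forall_dual_eq (𝕜 := ℂ)]
    intro g
    simpa using LinearMap.congr_fun hxy g
  exact (WeakBilin.isEmbedding hinj).t2Space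

/-- Norm-relative-compactness implies weak relative compactness. -/
theorem isCompact_closure_weak_of_norm {A : Set E} (hA : IsCompact (closure A)) :
    IsCompact (closure (toWeakSpace ℂ E '' A)) := by
  have := weakSpace_t2 (E := E)
  have hc : IsCompact (toWeakSpaceCLM ℂ E '' closure A) :=
    hA.image (toWeakSpaceCLM ℂ E).continuous
  refine hc.of_isClosed_subset isClosed_closure (closure_minimal ?_ hc.isClosed)
  rintro _ ⟨a, ha, rfl⟩
  exact ⟨a, subset_closure ha, rfl⟩

/-- Weak relative compactness is preserved by continuous linear images. -/
theorem isCompact_closure_weak_image (T : E →L[ℂ] F) {A : Set E}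
    (hA : IsCompact (closure (toWeakSpace ℂ E '' A))) :
    IsCompact (closure (toWeakSpace ℂ F '' (T '' A))) := by
  have := weakSpace_t2 (E := F)
  have hc : IsCompact (WeakSpace.map T '' closure (toWeakSpace ℂ E '' A)) :=
    hA.image (WeakSpace.map T).continuous
  refine hc.of_isClosed_subset isClosed_closure (closure_minimal ?_ hc.isClosed)
  rintro _ ⟨_, ⟨a, ha, rfl⟩, rfl⟩
  exact ⟨toWeakSpace ℂ E a, subset_closure ⟨a, ha, rfl⟩, rfl⟩

/-- Relative norm compactness pulls back along isometries into complete spaces. -/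
theorem isCompact_closure_of_isometry_image [CompleteSpace E] {T : E → F} (hT : Isometry T)
    {A : Set E} (hA : IsCompact (closure (T '' A))) : IsCompact (closure A) := by
  refine TotallyBounded.isCompact_of_isClosed ?_ isClosed_closure
  rw [totallyBounded_closure]
  exact (totallyBounded_image_iff hT.isUniformInducing).1
    (hA.totallyBounded.subset subset_closure)

end WeakAux

section QuotAux

variable {G : Type*} [Group G] [TopologicalSpace G] [IsTopologicalGroup G]
  (N : Subgroup G) [N.Normal]

/-- The continuous quotient map as a continuous map. -/
noncomputable def quotMapCM : C(G, G ⧸ N) := ⟨QuotientGroup.mk, QuotientGroup.continuous_mk⟩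

/-- Pullback of bounded continuous functions along the quotient map, as a CLM. -/
noncomputable def pullCLM : ((G ⧸ N) →ᵇ ℂ) →L[ℂ] (G →ᵇ ℂ) :=
  LinearMap.mkContinuous
    { toFun := fun f => f.compContinuous (quotMapCM N)
      map_add' := fun f g => by ext x; rfl
      map_smul' := fun c f => by ext x; rfl }
    1 (fun f => by simpa using norm_compContinuous_le f (quotMapCM N))

@[simp] theorem pullCLM_apply (f : (G ⧸ N) →ᵇ ℂ) (z : G) :
    pullCLM N f z = f (QuotientGroup.mk z) := rfl

theorem pullCLM_isometry : Isometry (pullCLM (G := G) N) := by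
  refine AddMonoidHomClass.isometry_of_norm _ (fun f => le_antisymm
    (norm_compContinuous_le f (quotMapCM N)) ?_)
  refine (BoundedContinuousFunction.norm_le (norm_nonneg _)).2 fun x => ?_
  obtain ⟨g, rfl⟩ := QuotientGroup.mk_surjective x
  exact (pullCLM N f).norm_coe_le_norm g

theorem pullCLM_biTranslate (x y : G) (f : (G ⧸ N) →ᵇ ℂ) :
    pullCLM N (biTranslate (QuotientGroup.mk x) (QuotientGroup.mk y) f)
      = biTranslate x y (pullCLM N f) := by
  ext z
  simp

theorem pullCLM_doubleOrbit (f : (G ⧸ N) →ᵇ ℂ) :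
    doubleOrbit (pullCLM N f) = pullCLM N '' doubleOrbit f := by
  ext g
  constructor
  · rintro ⟨x, y, rfl⟩
    exact ⟨biTranslate (QuotientGroup.mk x) (QuotientGroup.mk y) f, ⟨_, _, rfl⟩,
      pullCLM_biTranslate N x y f⟩
  · rintro ⟨-, ⟨a, b, rfl⟩, rfl⟩
    obtain ⟨x, rfl⟩ := QuotientGroup.mk_surjective a
    obtain ⟨y, rfl⟩ := QuotientGroup.mk_surjective b
    exact ⟨x, y, (pullCLM_biTranslate N x y f).symm⟩

end QuotAux

/-- If `N` is a closed normal subgroup of a locally compact group `G` and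
`WS(G) = AP(G)`, then `WS(G/N) = AP(G/N)`. -/
theorem stmt8 {G : Type*} [Group G] [TopologicalSpace G] [IsTopologicalGroup G]
    [LocallyCompactSpace G] [T2Space G]
    (N : Subgroup G) [N.Normal] (hNcl : IsClosed (N : Set G))
    (h : {f : G →ᵇ ℂ | IsWS f} = {f : G →ᵇ ℂ | IsAP f}) :
    {f : (G ⧸ N) →ᵇ ℂ | IsWS f} = {f : (G ⧸ N) →ᵇ ℂ | IsAP f} := by
  ext f
  simp only [Set.mem_setOf_eq]
  constructor
  · intro hf
    -- lift to `G`
    have hws : IsWS (pullCLM N f) := by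
      unfold IsWS RelWeaklyCompact
      rw [pullCLM_doubleOrbit]
      exact isCompact_closure_weak_image (pullCLM N) hf
    have hap : IsAP (pullCLM N f) := by
      have : pullCLM N f ∈ {g : G →ᵇ ℂ | IsWS g} := hws
      rw [h] at this
      exact this
    unfold IsAP at hap ⊢
    rw [pullCLM_doubleOrbit] at hap
    exact isCompact_closure_of_isometry_image (pullCLM_isometry N) hap
  · intro hf
    exact isCompact_closure_weak_of_norm hf
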